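/- arXiv:2310.02882 — 4 statements merged into one kernel-verified Lean document; each statement's English description precedes it below -/
import Mathlib

section
/- For any real numbers a, b ≥ 0, any ε ∈ (0,1], and any real p ≥ 1, (a+b)^p ≤ (1+ε)·a^p + (1 + 2p/ε)^p · b^p. -/
/-!
If `b ≤ (ε / 2p) a`, then `(a + b)^p ≤ (1 + ε/2p)^p a^p ≤ e^{ε/2} a^p ≤ (1 + ε) a^p`;
otherwise `a < (2p/ε) b`, and `(a + b)^p ≤ (1 + 2p/ε)^p b^p`.
-/

namespace Real

theorem add_rpow_le_one_add_rpow_mul_rpow {a b c p : ℝ} (ha : 0 ≤ a) (hb : 0 ≤ b)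
    (hc : 0 ≤ c) (hp : 0 ≤ p) (h : b ≤ c * a) : (a + b) ^ p ≤ (1 + c) ^ p * a ^ p := by
  calc (a + b) ^ p ≤ ((1 + c) * a) ^ p := rpow_le_rpow (by positivity) (by linarith) hp
    _ = (1 + c) ^ p * a ^ p := mul_rpow (by positivity) ha

theorem one_add_rpow_le_exp_mul {t p : ℝ} (ht : 0 ≤ t) (hp : 0 ≤ p) :
    (1 + t) ^ p ≤ exp (t * p) := by
  rw [exp_mul]
  exact rpow_le_rpow (by positivity) (by linarith [add_one_le_exp t]) hp

theorem exp_half_le_one_add {x : ℝ} (hx : 0 ≤ x) (hx1 : x ≤ 1) : exp (x / 2) ≤ 1 + x := by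
  calc exp (x / 2) ≤ 1 / (1 - x / 2) :=
        exp_bound_div_one_sub_of_interval (by positivity) (by linarith)
    _ ≤ 1 + x := by
      rw [div_le_iff₀ (by linarith)]
      nlinarith

theorem one_add_div_two_mul_rpow_le {ε p : ℝ} (hε : 0 < ε) (hε1 : ε ≤ 1) (hp : 0 < p) :
    (1 + ε / (2 * p)) ^ p ≤ 1 + ε := by
  calc (1 + ε / (2 * p)) ^ p ≤ exp (ε / (2 * p) * p) :=
        one_add_rpow_le_exp_mul (by positivity) hp.le
    _ = exp (ε / 2) := by field_simp
    _ ≤ 1 + ε := exp_half_le_one_add hε.le hε1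

end Real

/-- For any reals `a, b ≥ 0`, `ε ∈ (0,1]`, and real `p ≥ 1`,
`(a+b)^p ≤ (1+ε)·a^p + (1 + 2p/ε)^p · b^p`. -/
theorem pow_add_le_of_eps (a b ε p : ℝ) (ha : 0 ≤ a) (hb : 0 ≤ b)
    (hε : 0 < ε) (hε1 : ε ≤ 1) (hp : 1 ≤ p) :
    (a + b) ^ p ≤ (1 + ε) * a ^ p + (1 + 2 * p / ε) ^ p * b ^ p := by
  have hp0 : 0 < p := by linarith
  rcases le_or_gt b (ε / (2 * p) * a) with hsmall | hlarge
  · calc (a + b) ^ p ≤ (1 + ε / (2 * p)) ^ p * a ^ p :=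
          Real.add_rpow_le_one_add_rpow_mul_rpow ha hb (by positivity) hp0.le hsmall
      _ ≤ (1 + ε) * a ^ p := by
          gcongr
          exact Real.one_add_div_two_mul_rpow_le hε hε1 hp0
      _ ≤ _ := le_add_of_nonneg_right (by positivity)
  · have ha_le : a ≤ 2 * p / ε * b := by
      rw [div_mul_eq_mul_div, le_div_iff₀ hε]
      rw [div_mul_eq_mul_div, div_lt_iff₀ (by positivity)] at hlarge
      linarith
    calc (a + b) ^ p = (b + a) ^ p := by rw [add_comm]
      _ ≤ (1 + 2 * p / ε) ^ p * b ^ p :=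
          Real.add_rpow_le_one_add_rpow_mul_rpow hb ha (by positivity) hp0.le ha_le
      _ ≤ _ := le_add_of_nonneg_left (by positivity)
end

section
/- Let x_1,…,x_n ∈ [Δ]^d be a sequence of points with Euclidean distance, z ≥ 1 a constant, and for t ∈ [n] let σ_t = max over sets C of at most k centers of dist(x_t,C)^z / Σ_{i=1}^t dist(x_i,C)^z be the online sensitivity of x_t for (k,z)-clustering. Then Σ_{t=1}^n σ_t = O(2^{2z} · k · log²(n·d·Δ)). -/
open scoped BigOperators

/-- Distance from a point to a finite set of centers. -/
noncomputable def distToSet {d : ℕ} (x : EuclideanSpace ℝ (Fin d))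
    (C : Finset (EuclideanSpace ℝ (Fin d))) : ℝ :=
  sInf ((fun c => dist x c) '' (C : Set (EuclideanSpace ℝ (Fin d))))

/-- Cost of a single point with respect to a center set: `dist(x,C)^z`. -/
noncomputable def cost1 {d : ℕ} (z : ℝ) (x : EuclideanSpace ℝ (Fin d))
    (C : Finset (EuclideanSpace ℝ (Fin d))) : ℝ :=
  distToSet x C ^ z

/-- Online sensitivity of the `t`-th point of the stream `x` for `(k,z)`-clustering:
`σ_t = sup_{|C| ≤ k} dist(x_t,C)^z / ∑_{i=1}^t dist(x_i,C)^z`. -/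
noncomputable def onlineSens {d : ℕ} (k : ℕ) (z : ℝ)
    (x : ℕ → EuclideanSpace ℝ (Fin d)) (t : ℕ) : ℝ :=
  sSup {r : ℝ | ∃ C : Finset (EuclideanSpace ℝ (Fin d)), C.Nonempty ∧ C.card ≤ k ∧
    r = cost1 z (x t) C / ∑ i ∈ Finset.Icc 1 t, cost1 z (x i) C}

/-!
Let `OPT_t` be the optimal `(k, z)`-cost of `x_1, …, x_t`. While `OPT_t < 2^{-z}`, every prefix
point lies within `1/2` of one of at most `k` centers, and grid points are `1` apart, so the
prefix contains at most `k` distinct points; a point occurring for the `m`-th time has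
sensitivity at most `1/m`, so these times contribute at most `k H_n`.

The other times fall into `O(log(n d Δ))` bands on which `OPT_t` varies by a factor less than
`(4/3)^z`. On a band, fix a near-optimal solution `Cs` for its last time. The triangle
inequality through the nearest center of `Cs` and the power-mean inequality give
`σ_t ≤ 3^{z-1} (dist(x_t, Cs)^z / OPT_t + O(1) / m_t)`, where `m_t` counts the earlier points of
the Voronoi cell of `x_t`. The first terms add up to `O(4^z)` and the second to `O(4^z k H_n)`.
-/

open Finset

theorem Finset.sum_inv_card_filter_le_le_one_add_log {α : Type*} [LinearOrder α]
    (S : Finset α) {n : ℕ} (hS : #S ≤ n) :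
    ∑ t ∈ S, (#{i ∈ S | i ≤ t} : ℝ)⁻¹ ≤ 1 + Real.log n := by
  set rank : α → ℕ := fun t => #{i ∈ S | i ≤ t}
  have hrank : StrictMonoOn rank S := by
    intro t ht t' ht' htt'
    apply card_lt_card
    rw [ssubset_iff_of_subset (monotone_filter_right _ fun i _ (h : i ≤ t) => h.trans htt'.le)]
    exact ⟨t', mem_filter.2 ⟨ht', le_rfl⟩, by simp [htt']⟩
  have hmaps : ∀ t ∈ S, rank t ∈ Icc 1 n := fun t ht =>
    mem_Icc.2 ⟨card_pos.2 ⟨t, by simp [ht]⟩, (card_filter_le _ _).trans hS⟩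
  calc ∑ t ∈ S, ((rank t : ℕ) : ℝ)⁻¹ = ∑ j ∈ S.image rank, (j : ℝ)⁻¹ :=
        (sum_image (f := fun j : ℕ => (j : ℝ)⁻¹) hrank.injOn).symm
    _ ≤ ∑ j ∈ Icc 1 n, (j : ℝ)⁻¹ :=
        sum_le_sum_of_subset_of_nonneg (by simpa [subset_iff] using hmaps)
          fun _ _ _ => by positivity
    _ = harmonic n := by simp [harmonic_eq_sum_Icc]
    _ ≤ 1 + Real.log n := harmonic_le_one_add_log n

theorem Finset.sum_le_mul_of_band_sums_le {ι α : Type*} [LinearOrder α] (S : Finset ι)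
    (v : ι → α) (F : ι → ℝ) {w : ℕ → α} (hw : Monotone w) {L : ℕ} {B : ℝ}
    (hS : ∀ t ∈ S, w 0 ≤ v t ∧ v t < w L)
    (hB : ∀ ℓ < L, ∑ t ∈ S with w ℓ ≤ v t ∧ v t < w (ℓ + 1), F t ≤ B) :
    ∑ t ∈ S, F t ≤ L * B := by
  suffices h : ∀ m ≤ L, ∑ t ∈ S with v t < w m, F t ≤ m * B by
    simpa [filter_true_of_mem fun t ht => (hS t ht).2] using h L le_rfl
  intro m hm
  induction m with
  | zero => simp [filter_false_of_mem fun t ht => not_lt.2 (hS t ht).1]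
  | succ m ih =>
    rw [← sum_filter_add_sum_filter_not _ (fun t => v t < w m), filter_filter, filter_filter]
    have hlow : ∀ t, (v t < w (m + 1) ∧ v t < w m ↔ v t < w m) := fun t =>
      ⟨And.right, fun h => ⟨h.trans_le (hw m.le_succ), h⟩⟩
    have hband : ∀ t, (v t < w (m + 1) ∧ ¬v t < w m ↔ w m ≤ v t ∧ v t < w (m + 1)) :=
      fun t => by rw [not_lt, and_comm]
    simp only [hlow, hband]
    push_cast
    linarith [ih (by omega), hB m (by omega)]

namespace OnlineSensitivity

def prefixClassCard {γ : Type*} [DecidableEq γ] (g : ℕ → γ) (t : ℕ) : ℕ :=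
  #{i ∈ Icc 1 t | g i = g t}

theorem prefixClassCard_pos {γ : Type*} [DecidableEq γ] (g : ℕ → γ) {t : ℕ} (ht : 1 ≤ t) :
    0 < prefixClassCard g t :=
  card_pos.2 ⟨t, mem_filter.2 ⟨mem_Icc.2 ⟨ht, le_rfl⟩, rfl⟩⟩

theorem sum_inv_prefixClassCard_le {γ : Type*} [DecidableEq γ] (g : ℕ → γ) {S : Finset ℕ}
    {n : ℕ} (hS : S ⊆ Icc 1 n) :
    ∑ t ∈ S, (prefixClassCard g t : ℝ)⁻¹ ≤ #(S.image g) * (1 + Real.log n) := by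
  rw [← sum_fiberwise_of_maps_to fun t ht => mem_image_of_mem g ht, ← nsmul_eq_mul,
    ← sum_const]
  refine sum_le_sum fun v _ => ?_
  set Sv := {t ∈ S | g t = v}
  calc ∑ t ∈ Sv, (prefixClassCard g t : ℝ)⁻¹ ≤ ∑ t ∈ Sv, (#{i ∈ Sv | i ≤ t} : ℝ)⁻¹ := by
        refine sum_le_sum fun t ht => ?_
        have htv := (mem_filter.1 ht).2
        have hsub : {i ∈ Sv | i ≤ t} ⊆ {i ∈ Icc 1 t | g i = g t} := by
          intro i hi
          simp only [Sv, mem_filter, mem_Icc] at hi ⊢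
          exact ⟨⟨(mem_Icc.1 (hS hi.1.1)).1, hi.2⟩, hi.1.2.trans htv.symm⟩
        have hpos : 0 < #{i ∈ Sv | i ≤ t} := card_pos.2 ⟨t, mem_filter.2 ⟨ht, le_rfl⟩⟩
        gcongr
        exact card_le_card hsub
    _ ≤ 1 + Real.log n := Sv.sum_inv_card_filter_le_le_one_add_log
        ((card_filter_le _ _).trans ((card_le_card hS).trans (by simp)))

variable {d : ℕ}

local notation "ℝ^" d => EuclideanSpace ℝ (Fin d)

theorem distToSet_nonneg (p : ℝ^d) (C : Finset (ℝ^d)) : 0 ≤ distToSet p C :=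
  Real.sInf_nonneg (by rintro _ ⟨c, _, rfl⟩; exact dist_nonneg)

theorem distToSet_eq_inf' (p : ℝ^d) {C : Finset (ℝ^d)} (hC : C.Nonempty) :
    distToSet p C = C.inf' hC (dist p) :=
  (inf'_eq_csInf_image C hC _).symm

theorem distToSet_le_dist (p : ℝ^d) {C : Finset (ℝ^d)} {c : ℝ^d} (hc : c ∈ C) :
    distToSet p C ≤ dist p c := by
  rw [distToSet_eq_inf' p ⟨c, hc⟩]
  exact inf'_le _ hc

/-- Junk value `p` when `C` is empty. -/
noncomputable def nearest (C : Finset (ℝ^d)) (p : ℝ^d) : ℝ^d :=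
  if hC : C.Nonempty then (exists_mem_eq_inf' hC (dist p)).choose else p

theorem nearest_mem {C : Finset (ℝ^d)} (hC : C.Nonempty) (p : ℝ^d) : nearest C p ∈ C := by
  rw [nearest, dif_pos hC]
  exact (exists_mem_eq_inf' hC (dist p)).choose_spec.1

theorem dist_nearest {C : Finset (ℝ^d)} (hC : C.Nonempty) (p : ℝ^d) :
    dist p (nearest C p) = distToSet p C := by
  rw [nearest, dif_pos hC, distToSet_eq_inf' p hC]
  exact (exists_mem_eq_inf' hC (dist p)).choose_spec.2.symm

theorem distToSet_le_dist_add {C : Finset (ℝ^d)} (hC : C.Nonempty) (p q : ℝ^d) :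
    distToSet p C ≤ dist p q + distToSet q C := by
  rw [← dist_nearest hC q]
  exact (distToSet_le_dist p (nearest_mem hC q)).trans (dist_triangle _ _ _)

theorem dist_le_of_nearest_eq {C : Finset (ℝ^d)} (hC : C.Nonempty) {p q : ℝ^d}
    (h : nearest C p = nearest C q) : dist p q ≤ distToSet p C + distToSet q C := by
  rw [← dist_nearest hC p, ← dist_nearest hC q, h, dist_comm q]
  exact dist_triangle _ _ _

theorem cost1_nonneg (z : ℝ) (p : ℝ^d) (C : Finset (ℝ^d)) : 0 ≤ cost1 z p C :=
  Real.rpow_nonneg (distToSet_nonneg p C) z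

theorem distToSet_lt_of_cost1_lt {z : ℝ} (hz : 0 < z) {p : ℝ^d} {C : Finset (ℝ^d)} {r : ℝ}
    (hr : 0 ≤ r) (h : cost1 z p C < r ^ z) : distToSet p C < r :=
  (Real.rpow_lt_rpow_iff (distToSet_nonneg p C) hr hz).1 h

theorem cost1_le_of_nearest_eq {z : ℝ} (hz : 1 ≤ z) {Cs C : Finset (ℝ^d)} (hCs : Cs.Nonempty)
    (hC : C.Nonempty) {p q : ℝ^d} (h : nearest Cs p = nearest Cs q) :
    cost1 z p C ≤ 3 ^ (z - 1) * (cost1 z p Cs + cost1 z q Cs + cost1 z q C) := by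
  have htri : distToSet p C ≤ distToSet p Cs + distToSet q Cs + distToSet q C :=
    (distToSet_le_dist_add hC p q).trans
      (add_le_add_left (dist_le_of_nearest_eq hCs h) _)
  have hpow := Real.rpow_sum_le_const_mul_sum_rpow_of_nonneg (s := univ)
    (f := ![distToSet p Cs, distToSet q Cs, distToSet q C]) hz
    (by intro i _; fin_cases i <;> exact distToSet_nonneg _ _)
  simp only [Fin.sum_univ_three, card_univ, Fintype.card_fin] at hpow
  exact (Real.rpow_le_rpow (distToSet_nonneg _ _) htri (by linarith)).trans
    (by simpa [cost1] using hpow)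

noncomputable def prefixCost (z : ℝ) (x : ℕ → ℝ^d) (t : ℕ) (C : Finset (ℝ^d)) : ℝ :=
  ∑ i ∈ Icc 1 t, cost1 z (x i) C

/-- `OPT_t`, the optimal cost of `x_1, …, x_t`. -/
noncomputable def optCost (k : ℕ) (z : ℝ) (x : ℕ → ℝ^d) (t : ℕ) : ℝ :=
  sInf {r | ∃ C : Finset (ℝ^d), C.Nonempty ∧ #C ≤ k ∧ r = prefixCost z x t C}

section Costs

variable {k : ℕ} {z : ℝ} {x : ℕ → ℝ^d} {t : ℕ}

theorem prefixCost_nonneg (z : ℝ) (x : ℕ → ℝ^d) (t : ℕ) (C : Finset (ℝ^d)) :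
    0 ≤ prefixCost z x t C :=
  sum_nonneg fun i _ => cost1_nonneg z (x i) C

theorem sum_cost1_le_prefixCost {S : Finset ℕ} (hS : S ⊆ Icc 1 t) (C : Finset (ℝ^d)) :
    ∑ i ∈ S, cost1 z (x i) C ≤ prefixCost z x t C :=
  sum_le_sum_of_subset_of_nonneg hS fun i _ _ => cost1_nonneg z (x i) C

theorem prefixCost_mono {s : ℕ} (hst : s ≤ t) (C : Finset (ℝ^d)) :
    prefixCost z x s C ≤ prefixCost z x t C :=
  sum_cost1_le_prefixCost (Icc_subset_Icc le_rfl hst) C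

theorem optCost_le_prefixCost {C : Finset (ℝ^d)} (hC : C.Nonempty) (hCk : #C ≤ k) :
    optCost k z x t ≤ prefixCost z x t C :=
  csInf_le ⟨0, by rintro _ ⟨C, -, -, rfl⟩; exact prefixCost_nonneg z x t C⟩ ⟨C, hC, hCk, rfl⟩

theorem exists_prefixCost_lt (hk : 1 ≤ k) {r : ℝ} (h : optCost k z x t < r) :
    ∃ C : Finset (ℝ^d), C.Nonempty ∧ #C ≤ k ∧ prefixCost z x t C < r := by
  have hne : {r | ∃ C : Finset (ℝ^d), C.Nonempty ∧ #C ≤ k ∧ r = prefixCost z x t C}.Nonempty :=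
    ⟨_, {0}, singleton_nonempty 0, by simpa using hk, rfl⟩
  obtain ⟨_, ⟨C, hC, hCk, rfl⟩, hr⟩ := exists_lt_of_csInf_lt hne h
  exact ⟨C, hC, hCk, hr⟩

theorem onlineSens_le {B : ℝ} (hB : 0 ≤ B)
    (h : ∀ C : Finset (ℝ^d), C.Nonempty → #C ≤ k → cost1 z (x t) C / prefixCost z x t C ≤ B) :
    onlineSens k z x t ≤ B :=
  Real.sSup_le (by rintro _ ⟨C, hC, hCk, rfl⟩; exact h C hC hCk) hB

/-- A point repeated `m` times among the first `t` pays its cost `m` times in the denominator. -/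
theorem onlineSens_le_inv_prefixClassCard (ht : 1 ≤ t) :
    onlineSens k z x t ≤ (prefixClassCard x t : ℝ)⁻¹ := by
  have hm : (0 : ℝ) < prefixClassCard x t := by exact_mod_cast prefixClassCard_pos x ht
  refine onlineSens_le (inv_nonneg.2 hm.le) fun C _ _ => ?_
  refine div_le_of_le_mul₀ (prefixCost_nonneg z x t C) (inv_nonneg.2 hm.le) ?_
  rw [inv_mul_eq_div, le_div_iff₀' hm]
  calc (prefixClassCard x t : ℝ) * cost1 z (x t) C
      = ∑ i ∈ Icc 1 t with x i = x t, cost1 z (x i) C := by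
        rw [sum_congr rfl fun i hi => by rw [(mem_filter.1 hi).2], sum_const, nsmul_eq_mul]
        rfl
    _ ≤ prefixCost z x t C := sum_cost1_le_prefixCost (filter_subset _ _) C

theorem onlineSens_le_of_le_optCost (hz : 1 ≤ z) (ht : 1 ≤ t) {Cs : Finset (ℝ^d)}
    (hCs : Cs.Nonempty) {W : ℝ} (hW : 0 < W) (hWt : W ≤ optCost k z x t) :
    onlineSens k z x t ≤ 3 ^ (z - 1) * (cost1 z (x t) Cs / W +
      (prefixCost z x t Cs / W + 1) * (prefixClassCard (nearest Cs ∘ x) t : ℝ)⁻¹) := by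
  set m : ℝ := (prefixClassCard (nearest Cs ∘ x) t : ℝ)
  set P := {i ∈ Icc 1 t | nearest Cs (x i) = nearest Cs (x t)}
  set R : ℝ := 3 ^ (z - 1)
  set u := cost1 z (x t) Cs
  set Ct := prefixCost z x t Cs
  have hm : 0 < m := Nat.cast_pos.2 (prefixClassCard_pos _ ht)
  have hR : 0 < R := by positivity
  have hu : 0 ≤ u := cost1_nonneg z (x t) Cs
  have hCt : 0 ≤ Ct := prefixCost_nonneg z x t Cs
  refine onlineSens_le (by positivity) fun C hC hCk => ?_
  set D := prefixCost z x t C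
  have hWD : W ≤ D := hWt.trans (optCost_le_prefixCost hC hCk)
  have hclass : m * cost1 z (x t) C ≤ R * (m * u + Ct + D) := calc
    m * cost1 z (x t) C = ∑ _i ∈ P, cost1 z (x t) C := by
      rw [sum_const, nsmul_eq_mul]; rfl
    _ ≤ ∑ i ∈ P, R * (u + cost1 z (x i) Cs + cost1 z (x i) C) :=
      sum_le_sum fun i hi => cost1_le_of_nearest_eq hz hCs hC (mem_filter.1 hi).2.symm
    _ = R * (m * u + ∑ i ∈ P, cost1 z (x i) Cs + ∑ i ∈ P, cost1 z (x i) C) := by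
      rw [← mul_sum, sum_add_distrib, sum_add_distrib, sum_const, nsmul_eq_mul]; rfl
    _ ≤ R * (m * u + Ct + D) := by
      gcongr <;> exact sum_cost1_le_prefixCost (filter_subset _ _) _
  have hDW : 1 ≤ D / W := (one_le_div hW).2 hWD
  refine div_le_of_le_mul₀ (hW.le.trans hWD) (by positivity) ?_
  calc cost1 z (x t) C ≤ R * (u + (Ct + D) / m) := by
        refine le_of_mul_le_mul_left (hclass.trans_eq ?_) hm
        field_simp
        ring
    _ ≤ R * (u * (D / W) + (Ct * (D / W) + D) / m) := by gcongr <;> nlinarith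
    _ = R * (u / W + (Ct / W + 1) * m⁻¹) * D := by field_simp

end Costs

/-- Membership in the grid `[Δ]^d = {1, …, Δ}^d`. -/
def InGrid (Δ : ℕ) (p : ℝ^d) : Prop :=
  ∀ a, ∃ m : ℕ, 1 ≤ m ∧ m ≤ Δ ∧ p a = m

theorem InGrid.one_le_dist {Δ : ℕ} {p q : ℝ^d} (hp : InGrid Δ p) (hq : InGrid Δ q)
    (hpq : p ≠ q) : 1 ≤ dist p q := by
  obtain ⟨a, ha⟩ : ∃ a, p a ≠ q a := by
    by_contra! h
    exact hpq (PiLp.ext h)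
  obtain ⟨m, -, -, hm⟩ := hp a
  obtain ⟨m', -, -, hm'⟩ := hq a
  rw [hm, hm', Ne, Nat.cast_inj] at ha
  calc (1 : ℝ) ≤ |(m : ℝ) - m'| := by
        exact_mod_cast Int.one_le_abs (sub_ne_zero.2 (Nat.cast_injective.ne ha))
    _ = dist (p a) (q a) := by rw [Real.dist_eq, hm, hm']
    _ ≤ dist p q := PiLp.dist_apply_le p q a

theorem InGrid.dist_le {Δ : ℕ} {p q : ℝ^d} (hp : InGrid Δ p) (hq : InGrid Δ q) :
    dist p q ≤ d * Δ := by
  have hcoord : ∀ a, dist (p a) (q a) ≤ Δ := fun a => by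
    obtain ⟨m, -, hmΔ, hm⟩ := hp a
    obtain ⟨m', -, hmΔ', hm'⟩ := hq a
    rw [hm, hm', Real.dist_eq, abs_sub_le_iff]
    constructor <;> linarith [(Nat.cast_le (α := ℝ)).2 hmΔ, (Nat.cast_le (α := ℝ)).2 hmΔ',
      Nat.cast_nonneg (α := ℝ) m, Nat.cast_nonneg (α := ℝ) m']
  have hd : (d : ℝ) * Δ ^ 2 ≤ (d * Δ) ^ 2 := by
    rw [mul_pow]
    exact mul_le_mul_of_nonneg_right (by exact_mod_cast Nat.le_self_pow two_ne_zero d)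
      (sq_nonneg _)
  rw [EuclideanSpace.dist_eq]
  calc √(∑ a, dist (p a) (q a) ^ 2) ≤ √(∑ _a : Fin d, (Δ : ℝ) ^ 2) := by
        gcongr with a
        exact hcoord a
    _ ≤ √((d * Δ) ^ 2) := Real.sqrt_le_sqrt (by simpa using hd)
    _ = d * Δ := Real.sqrt_sq (by positivity)

section Bands

variable {k : ℕ} {z : ℝ} {x : ℕ → ℝ^d}

/-- Grid points are `1` apart, so points within `1/2` of `C` have distinct nearest centers. -/
theorem card_image_le_of_prefixCost_lt (hz : 0 < z) {Δ t : ℕ}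
    (hx : ∀ i ∈ Icc 1 t, InGrid Δ (x i)) {C : Finset (ℝ^d)} (hC : C.Nonempty)
    (h : prefixCost z x t C < (1 / 2 : ℝ) ^ z) : #((Icc 1 t).image x) ≤ #C := by
  have hnear : ∀ i ∈ Icc 1 t, distToSet (x i) C < 1 / 2 := fun i hi =>
    distToSet_lt_of_cost1_lt hz (by norm_num)
      ((single_le_sum (fun j _ => cost1_nonneg z (x j) C) hi).trans_lt h)
  refine card_le_card_of_injOn (nearest C) (fun p _ => nearest_mem hC p) ?_
  rintro _ hp _ hq hij
  obtain ⟨i, hi, rfl⟩ := mem_image.1 hp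
  obtain ⟨j, hj, rfl⟩ := mem_image.1 hq
  by_contra hne
  linarith [(hx i hi).one_le_dist (hx j hj) hne, dist_le_of_nearest_eq hC hij,
    hnear i hi, hnear j hj]

theorem sum_onlineSens_of_optCost_lt_le (hz : 0 < z) (hk : 1 ≤ k) {n Δ : ℕ}
    (hx : ∀ t ∈ Icc 1 n, InGrid Δ (x t)) :
    ∑ t ∈ Icc 1 n with optCost k z x t < (1 / 2 : ℝ) ^ z, onlineSens k z x t ≤
      k * (1 + Real.log n) := by
  set T := {t ∈ Icc 1 n | optCost k z x t < (1 / 2 : ℝ) ^ z}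
  have hlog := Real.log_natCast_nonneg n
  rcases T.eq_empty_or_nonempty with hT | hT
  · rw [hT, sum_empty]
    positivity
  have hτ := mem_filter.1 (T.max'_mem hT)
  have hTτ : T ⊆ Icc 1 (T.max' hT) := fun t ht =>
    mem_Icc.2 ⟨(mem_Icc.1 (mem_filter.1 ht).1).1, T.le_max' t ht⟩
  obtain ⟨C, hC, hCk, hcost⟩ := exists_prefixCost_lt hk hτ.2
  have hxτ : ∀ i ∈ Icc 1 (T.max' hT), InGrid Δ (x i) := fun i hi =>
    hx i (Icc_subset_Icc le_rfl (mem_Icc.1 hτ.1).2 hi)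
  have hdistinct : #(T.image x) ≤ k :=
    ((card_le_card (image_subset_image hTτ)).trans
      (card_image_le_of_prefixCost_lt hz hxτ hC hcost)).trans hCk
  calc ∑ t ∈ T, onlineSens k z x t ≤ ∑ t ∈ T, (prefixClassCard x t : ℝ)⁻¹ :=
        sum_le_sum fun t ht => onlineSens_le_inv_prefixClassCard (mem_Icc.1 (mem_filter.1 ht).1).1
    _ ≤ #(T.image x) * (1 + Real.log n) := sum_inv_prefixClassCard_le x (filter_subset _ _)
    _ ≤ k * (1 + Real.log n) := by gcongr

theorem three_rpow_sub_one_mul_four_thirds_rpow (z : ℝ) :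
    (3 : ℝ) ^ (z - 1) * (4 / 3 : ℝ) ^ z = 4 ^ z / 3 := by
  rw [Real.rpow_sub_one three_ne_zero, div_mul_eq_mul_div,
    ← Real.mul_rpow (by norm_num) (by norm_num)]
  norm_num

theorem sum_onlineSens_band_le (hz : 1 ≤ z) (hk : 1 ≤ k) {n : ℕ} {T : Finset ℕ}
    (hT : T ⊆ Icc 1 n) {W : ℝ} (hW : 0 < W)
    (hband : ∀ t ∈ T, W ≤ optCost k z x t ∧ optCost k z x t < (4 / 3 : ℝ) ^ z * W) :
    ∑ t ∈ T, onlineSens k z x t ≤ 4 ^ z * (1 + k * (1 + Real.log n)) := by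
  have hlog := Real.log_natCast_nonneg n
  rcases T.eq_empty_or_nonempty with rfl | hT0
  · rw [sum_empty]
    positivity
  set Q : ℝ := (4 / 3 : ℝ) ^ z
  set R : ℝ := (3 : ℝ) ^ (z - 1)
  have hQ : 1 ≤ Q := Real.one_le_rpow (by norm_num) (by linarith)
  have hRQ : R * Q = 4 ^ z / 3 := three_rpow_sub_one_mul_four_thirds_rpow z
  have hTe : T ⊆ Icc 1 (T.max' hT0) := fun t ht =>
    mem_Icc.2 ⟨(mem_Icc.1 (hT ht)).1, T.le_max' t ht⟩
  obtain ⟨Cs, hCs, hCsk, hcost⟩ := exists_prefixCost_lt hk (hband _ (T.max'_mem hT0)).2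
  set m : ℕ → ℝ := fun t => prefixClassCard (nearest Cs ∘ x) t
  have hpoint : ∀ t ∈ T, onlineSens k z x t ≤ R * (cost1 z (x t) Cs / W + (Q + 1) * (m t)⁻¹) :=
    fun t ht => (onlineSens_le_of_le_optCost hz (mem_Icc.1 (hT ht)).1 hCs hW (hband t ht).1).trans
      (by
        gcongr
        rw [div_le_iff₀ hW]
        exact (prefixCost_mono (mem_Icc.1 (hTe ht)).2 Cs).trans hcost.le)
  have hcosts : (∑ t ∈ T, cost1 z (x t) Cs) / W ≤ Q :=
    (div_le_iff₀ hW).2 ((sum_cost1_le_prefixCost hTe Cs).trans hcost.le)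
  have hcells : ∑ t ∈ T, (m t)⁻¹ ≤ k * (1 + Real.log n) :=
    (sum_inv_prefixClassCard_le _ hT).trans (by
      gcongr
      exact_mod_cast
        (card_le_card (image_subset_iff.2 fun t _ => nearest_mem hCs (x t))).trans hCsk)
  set K : ℝ := k * (1 + Real.log n)
  calc ∑ t ∈ T, onlineSens k z x t
      ≤ ∑ t ∈ T, R * (cost1 z (x t) Cs / W + (Q + 1) * (m t)⁻¹) := sum_le_sum hpoint
    _ = R * ((∑ t ∈ T, cost1 z (x t) Cs) / W + (Q + 1) * ∑ t ∈ T, (m t)⁻¹) := by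
        rw [← mul_sum, sum_add_distrib, sum_div, mul_sum]
    _ ≤ R * (Q + (Q + 1) * K) := by gcongr
    _ ≤ R * Q * (1 + 2 * K) := by
        nlinarith [mul_le_mul_of_nonneg_left hQ (by positivity : 0 ≤ R * K)]
    _ ≤ 4 ^ z * (1 + K) := by
        rw [hRQ]
        linarith [(by positivity : (0 : ℝ) ≤ 4 ^ z), (by positivity : (0 : ℝ) ≤ 4 ^ z * K)]

theorem optCost_le_rpow (hz : 1 ≤ z) (hk : 1 ≤ k) {n Δ t : ℕ}
    (hx : ∀ i ∈ Icc 1 n, InGrid Δ (x i)) (hn : 1 ≤ n) (ht : t ≤ n) :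
    optCost k z x t ≤ (n * d * Δ : ℝ) ^ z := by
  have h1 : 1 ∈ Icc 1 n := mem_Icc.2 ⟨le_rfl, hn⟩
  calc optCost k z x t ≤ prefixCost z x t {x 1} :=
        optCost_le_prefixCost (singleton_nonempty _) (by simpa using hk)
    _ ≤ ∑ _i ∈ Icc 1 t, (d * Δ : ℝ) ^ z := sum_le_sum fun i hi => by
        have hi' : i ∈ Icc 1 n := Icc_subset_Icc le_rfl ht hi
        exact Real.rpow_le_rpow (distToSet_nonneg _ _)
          ((distToSet_le_dist _ (mem_singleton_self _)).trans ((hx i hi').dist_le (hx 1 h1)))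
          (by linarith)
    _ ≤ n * (d * Δ : ℝ) ^ z := by
        rw [sum_const, Nat.card_Icc, Nat.add_sub_cancel, nsmul_eq_mul]
        gcongr
    _ ≤ (n : ℝ) ^ z * (d * Δ : ℝ) ^ z := by
        gcongr
        exact Real.self_le_rpow_of_one_le (Nat.one_le_cast.2 hn) hz
    _ = (n * d * Δ : ℝ) ^ z := by
        rw [mul_assoc, Real.mul_rpow (x := (n : ℝ)) (by positivity) (by positivity)]

end Bands

/-- The times `t` with `OPT_t` between two consecutive thresholds form a band. -/
noncomputable def bandScale (z : ℝ) (ℓ : ℕ) : ℝ :=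
  ((4 / 3 : ℝ) ^ ℓ / 2) ^ z

theorem bandScale_zero (z : ℝ) : bandScale z 0 = (1 / 2 : ℝ) ^ z := by
  simp [bandScale]

theorem bandScale_succ (z : ℝ) (ℓ : ℕ) :
    bandScale z (ℓ + 1) = (4 / 3 : ℝ) ^ z * bandScale z ℓ := by
  rw [bandScale, bandScale, ← Real.mul_rpow (by norm_num) (by positivity), pow_succ]
  ring_nf

theorem bandScale_pos (z : ℝ) (ℓ : ℕ) : 0 < bandScale z ℓ := by
  unfold bandScale
  positivity

theorem bandScale_monotone {z : ℝ} (hz : 0 ≤ z) : Monotone (bandScale z) := fun a b hab =>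
  Real.rpow_le_rpow (by positivity)
    (div_le_div_of_nonneg_right (pow_le_pow_right₀ (by norm_num) hab) zero_le_two) hz

theorem exists_lt_pow_le_log_div_log_add_one {r X : ℝ} (hr : 1 < r) (hX : 1 ≤ X) :
    ∃ L : ℕ, X < r ^ L ∧ (L : ℝ) ≤ Real.log X / Real.log r + 1 := by
  have hlogr := Real.log_pos hr
  have hq : 0 ≤ Real.log X / Real.log r := div_nonneg (Real.log_nonneg hX) hlogr.le
  refine ⟨⌊Real.log X / Real.log r⌋₊ + 1, Real.lt_pow_of_log_lt (by linarith) ?_, ?_⟩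
  · rw [← div_lt_iff₀ hlogr]
    exact_mod_cast Nat.lt_floor_add_one _
  · push_cast
    linarith [Nat.floor_le hq]

theorem exists_rpow_lt_bandScale {z : ℝ} (hz : 0 < z) {X : ℝ} (hX : 1 ≤ X) :
    ∃ L : ℕ, X ^ z < bandScale z L ∧ (L : ℝ) ≤ 4 * Real.log (2 * X) + 1 := by
  obtain ⟨L, hXL, hL⟩ := exists_lt_pow_le_log_div_log_add_one (by norm_num : (1 : ℝ) < 4 / 3)
    (by linarith : 1 ≤ 2 * X)
  have hlog43 : 1 / 4 ≤ Real.log (4 / 3) := by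
    have := Real.one_sub_inv_le_log_of_pos (by norm_num : (0 : ℝ) < 4 / 3)
    norm_num at this ⊢
    linarith
  refine ⟨L, Real.rpow_lt_rpow (by linarith) (by linarith) hz, hL.trans ?_⟩
  have := div_le_div_of_nonneg_left (Real.log_nonneg (by linarith : 1 ≤ 2 * X))
    (by norm_num) hlog43
  linarith

theorem band_total_le_log_sq {n d k Δ L : ℕ} {z : ℝ} (hz : 0 ≤ z) (hn : 2 ≤ n) (hd : 1 ≤ d)
    (hk : 1 ≤ k) (hΔ : 2 ≤ Δ) (hL : (L : ℝ) ≤ 4 * Real.log (2 * (n * d * Δ)) + 1) :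
    k * (1 + Real.log n) + L * (4 ^ z * (1 + k * (1 + Real.log n))) ≤
      26 * 2 ^ (2 * z) * k * Real.log (n * d * Δ) ^ 2 := by
  set Λ := Real.log (n * d * Δ)
  have hX : (4 : ℝ) ≤ n * d * Δ := by
    have : 2 * 1 * 2 ≤ n * d * Δ := Nat.mul_le_mul (Nat.mul_le_mul hn hd) hΔ
    exact_mod_cast this
  have hΛ : 1 ≤ Λ := (Real.le_log_iff_exp_le (by linarith)).2
    (by linarith [Real.exp_one_lt_d9])
  have hlogn : Real.log n ≤ Λ := Real.log_le_log (by norm_cast; omega) (by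
    have : n ≤ n * d * Δ := Nat.le_mul_of_pos_right _ (by omega) |>.trans
      (Nat.le_mul_of_pos_right _ (by omega))
    exact_mod_cast this)
  have hlogn0 := Real.log_natCast_nonneg n
  have hL' : (L : ℝ) ≤ 8 * Λ := by
    rw [Real.log_mul two_ne_zero (by linarith)] at hL
    linarith [Real.log_two_lt_d9]
  have h4 : (2 : ℝ) ^ (2 * z) = 4 ^ z := by
    rw [Real.rpow_mul zero_le_two]
    norm_num
  have h4z : 1 ≤ (4 : ℝ) ^ z := Real.one_le_rpow (by norm_num) hz
  have hk' : (1 : ℝ) ≤ k := by exact_mod_cast hk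
  rw [h4]
  have e0 := mul_le_mul_of_nonneg_left (by nlinarith : 1 + Real.log n ≤ 2 * Λ * Λ)
    (Nat.cast_nonneg (α := ℝ) k)
  have e1 : 1 + k * (1 + Real.log n) ≤ 3 * k * Λ := by
    nlinarith [mul_le_mul_of_nonneg_left (by linarith : 1 + Real.log n ≤ 2 * Λ)
      (Nat.cast_nonneg (α := ℝ) k)]
  have e2 : (L : ℝ) * (4 ^ z * (1 + k * (1 + Real.log n))) ≤ 8 * Λ * (4 ^ z * (3 * k * Λ)) := by
    gcongr
  have e3 := mul_le_mul_of_nonneg_left h4z (by positivity : (0 : ℝ) ≤ 2 * k * Λ * Λ)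
  nlinarith

end OnlineSensitivity

open OnlineSensitivity in
/-- Upper bound on the sum of online sensitivities: for points `x_1,…,x_n ∈ [Δ]^d`,
`∑_t σ_t = O(2^{2z} k log²(n d Δ))`, with an absolute constant. -/
theorem total_online_sensitivity_bound :
    ∃ A : ℝ, 0 < A ∧ ∀ (n d k Δ : ℕ) (z : ℝ), 1 ≤ z → 2 ≤ n → 1 ≤ d → 1 ≤ k → 2 ≤ Δ →
      ∀ x : ℕ → EuclideanSpace ℝ (Fin d),
        (∀ t ∈ Finset.Icc 1 n, ∀ a : Fin d, ∃ m : ℕ, 1 ≤ m ∧ m ≤ Δ ∧ x t a = m) →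
        ∑ t ∈ Finset.Icc 1 n, onlineSens k z x t ≤
          A * 2 ^ (2 * z) * k * (Real.log (n * d * Δ)) ^ 2 := by
  refine ⟨26, by norm_num, fun n d k Δ z hz hn hd hk hΔ x hx => ?_⟩
  have hX : (1 : ℝ) ≤ n * d * Δ := by
    have : 1 ≤ n * d * Δ := Nat.one_le_iff_ne_zero.2 (by positivity)
    exact_mod_cast this
  obtain ⟨L, hcover, hL⟩ := exists_rpow_lt_bandScale (by linarith) hX
  have hopt : ∀ t ∈ Icc 1 n, optCost k z x t < bandScale z L := fun t ht =>
    (optCost_le_rpow hz hk hx (by omega) (mem_Icc.1 ht).2).trans_lt hcover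
  calc ∑ t ∈ Icc 1 n, onlineSens k z x t
      = ∑ t ∈ Icc 1 n with optCost k z x t < (1 / 2 : ℝ) ^ z, onlineSens k z x t +
        ∑ t ∈ Icc 1 n with ¬optCost k z x t < (1 / 2 : ℝ) ^ z, onlineSens k z x t :=
        (sum_filter_add_sum_filter_not _ _ _).symm
    _ ≤ k * (1 + Real.log n) + L * (4 ^ z * (1 + k * (1 + Real.log n))) := by
        gcongr
        · exact sum_onlineSens_of_optCost_lt_le (by linarith) hk hx
        · refine sum_le_mul_of_band_sums_le _ (optCost k z x) _ (bandScale_monotone (by linarith))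
            (fun t ht => ⟨?_, hopt t (mem_filter.1 ht).1⟩) fun ℓ _ =>
            sum_onlineSens_band_le hz hk ((filter_subset _ _).trans (filter_subset _ _))
              (bandScale_pos z ℓ) fun t ht => ?_
          · rw [bandScale_zero]
            exact not_lt.1 (mem_filter.1 ht).2
          · rw [← bandScale_succ]
            exact (mem_filter.1 ht).2
    _ ≤ 26 * 2 ^ (2 * z) * k * Real.log (n * d * Δ) ^ 2 :=
        band_total_le_log_sq (by linarith) hn hd hk hΔ hL
end

section
/- Let t_{i-1} < t_i be times in a stream of points x_1,…,x_n ∈ [Δ]^d with OPT(X_{t_i}) ≤ 2·OPT(X_{t_{i-1}}), where OPT(X_t) is the optimal (k,z)-clustering cost of the first t points. Let K be an optimal set of k centers for X_{t_i} and π the assignment of points to nearest centers in K. Then for every t ∈ (t_{i-1}, t_i] and every set C of k centers, dist(x_t,C)^z / Σ_{j=1}^t dist(x_j,C)^z ≤ 2^z · dist(x_t,π(x_t))^z / Σ_{j=1}^t dist(x_j,π(x_j))^z + 3·2^{2z-1} / |S_t|, where S_t = {x_j : j ≤ t, π(x_j) = π(x_t)}. -/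
/-!
The cost of `x_t` with respect to `C` is controlled through its center `π(x_t)`: by the
triangle inequality and `(a + b)^z ≤ 2^(z-1) (a^z + b^z)`,
`dist(x_t, C)^z ≤ 2^(z-1) (dist(x_t, π(x_t))^z + dist(π(x_t), C)^z)`.
The same inequality summed over the cluster `S_t` bounds `|S_t| · dist(π(x_t), C)^z` by
`2^(z-1) (cost_K(X_t) + cost_C(X_t))`. Finally the doubling condition gives
`cost_K(X_t) ≤ OPT(X_{t_i}) ≤ 2 OPT(X_{t_{i-1}}) ≤ 2 cost_C(X_t)`, which turns both terms into
the claimed bound.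
-/

open scoped BigOperators Classical

open Finset Metric

lemma add_rpow_le_two_rpow_mul {a b p : ℝ} (ha : 0 ≤ a) (hb : 0 ≤ b) (hp : 1 ≤ p) :
    (a + b) ^ p ≤ 2 ^ (p - 1) * (a ^ p + b ^ p) := by
  lift a to NNReal using ha
  lift b to NNReal using hb
  exact_mod_cast NNReal.rpow_add_le_mul_rpow_add_rpow a b hp

section InfDist

variable {α : Type*} [PseudoMetricSpace α] {p : ℝ}

lemma infDist_rpow_le_two_rpow_mul (hp : 1 ≤ p) (s : Set α) (x y : α) :
    infDist x s ^ p ≤ 2 ^ (p - 1) * (dist x y ^ p + infDist y s ^ p) :=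
  calc infDist x s ^ p ≤ (dist x y + infDist y s) ^ p := by
        gcongr
        · exact infDist_nonneg
        · linarith [infDist_le_infDist_add_dist (x := x) (y := y) (s := s)]
    _ ≤ 2 ^ (p - 1) * (dist x y ^ p + infDist y s ^ p) :=
        add_rpow_le_two_rpow_mul dist_nonneg infDist_nonneg hp

lemma card_filter_mul_infDist_rpow_le {ι : Type*} [DecidableEq α] (hp : 1 ≤ p) (s : Set α)
    (y q : ι → α) (T : Finset ι) (c : α) :
    ((T.filter (fun j => q j = c)).card : ℝ) * infDist c s ^ p ≤
      2 ^ (p - 1) * (∑ j ∈ T, dist (y j) (q j) ^ p + ∑ j ∈ T, infDist (y j) s ^ p) := by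
  set S := T.filter (fun j => q j = c)
  have hpoint : ∀ j ∈ S,
      infDist c s ^ p ≤ 2 ^ (p - 1) * (dist (y j) (q j) ^ p + infDist (y j) s ^ p) := by
    intro j hj
    rw [(mem_filter.mp hj).2, dist_comm]
    exact infDist_rpow_le_two_rpow_mul hp s c (y j)
  have hnonneg : ∀ j ∈ T, 0 ≤ dist (y j) (q j) ^ p + infDist (y j) s ^ p := fun j _ =>
    add_nonneg (Real.rpow_nonneg dist_nonneg p) (Real.rpow_nonneg infDist_nonneg p)
  calc (S.card : ℝ) * infDist c s ^ p
      ≤ ∑ j ∈ S, 2 ^ (p - 1) * (dist (y j) (q j) ^ p + infDist (y j) s ^ p) := by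
        simpa using card_nsmul_le_sum S _ _ hpoint
    _ ≤ ∑ j ∈ T, 2 ^ (p - 1) * (dist (y j) (q j) ^ p + infDist (y j) s ^ p) :=
        sum_le_sum_of_subset_of_nonneg (filter_subset _ _) fun j hj _ =>
          mul_nonneg (by positivity) (hnonneg j hj)
    _ = _ := by rw [← mul_sum, sum_add_distrib]

end InfDist

lemma distToSet_eq_infDist {d : ℕ} (x : EuclideanSpace ℝ (Fin d))
    (C : Finset (EuclideanSpace ℝ (Fin d))) : distToSet x C = infDist x C := by
  rw [distToSet, sInf_image', infDist_eq_iInf]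

lemma cost1_eq_infDist_rpow {d : ℕ} (z : ℝ) (x : EuclideanSpace ℝ (Fin d))
    (C : Finset (EuclideanSpace ℝ (Fin d))) : cost1 z x C = infDist x C ^ z := by
  rw [cost1, distToSet_eq_infDist]

lemma monotone_sum_Icc_cost1 {d : ℕ} (z : ℝ) (x : ℕ → EuclideanSpace ℝ (Fin d))
    (C : Finset (EuclideanSpace ℝ (Fin d))) :
    Monotone fun t => ∑ j ∈ Icc 1 t, cost1 z (x j) C := fun _ _ h =>
  sum_le_sum_of_subset_of_nonneg (Icc_subset_Icc_right h) fun j _ _ => by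
    rw [cost1_eq_infDist_rpow]; exact Real.rpow_nonneg infDist_nonneg z

lemma div_le_of_cluster_bound {a A B D e s P : ℝ} (hA : 0 < A) (hB : 0 < B) (hs : 0 < s)
    (hP : 0 ≤ P) (hD : 0 ≤ D) (hBA : B ≤ 2 * A) (ha : a ≤ P * (D + e))
    (he : s * e ≤ P * (B + A)) :
    a / A ≤ 2 * P * D / B + 3 * P ^ 2 / s := by
  have hD' : P * D / A ≤ 2 * P * D / B := by
    rw [div_le_div_iff₀ hA hB]; nlinarith [mul_nonneg hP hD]
  have he' : P * e / A ≤ 3 * P ^ 2 / s := by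
    rw [div_le_div_iff₀ hA hs]; nlinarith [mul_le_mul_of_nonneg_left he hP, mul_nonneg hP hP]
  calc a / A ≤ P * D / A + P * e / A := by rw [← add_div, ← mul_add]; gcongr
    _ ≤ _ := add_le_add hD' he'

lemma two_rpow_eq_two_mul_two_rpow_sub_one (z : ℝ) : (2 : ℝ) ^ z = 2 * 2 ^ (z - 1) := by
  rw [Real.rpow_sub_one two_ne_zero]; ring

lemma two_rpow_two_mul_sub_one (z : ℝ) : (2 : ℝ) ^ (2 * z - 1) = 2 * (2 ^ (z - 1)) ^ 2 := by
  rw [sq, ← Real.rpow_add two_pos, show 2 * z - 1 = z - 1 + (z - 1) + 1 by ring,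
    Real.rpow_add_one two_ne_zero]
  ring

theorem online_sens_block_bound_general (d k : ℕ) (z : ℝ) (hz : 1 ≤ z)
    (x : ℕ → EuclideanSpace ℝ (Fin d)) (t₀ t₁ : ℕ)
    (OPT : ℕ → ℝ)
    (hOPT : ∀ t, IsGLB {r : ℝ | ∃ C : Finset (EuclideanSpace ℝ (Fin d)),
      C.Nonempty ∧ C.card = k ∧ r = ∑ j ∈ Finset.Icc 1 t, cost1 z (x j) C} (OPT t))
    (hdouble : OPT t₁ ≤ 2 * OPT t₀)
    (K : Finset (EuclideanSpace ℝ (Fin d)))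
    (hKopt : ∑ j ∈ Finset.Icc 1 t₁, cost1 z (x j) K = OPT t₁)
    (π : EuclideanSpace ℝ (Fin d) → EuclideanSpace ℝ (Fin d))
    (hπ : ∀ p, π p ∈ K ∧ dist p (π p) = distToSet p K)
    (t : ℕ) (ht0 : t₀ < t) (htt : t ≤ t₁)
    (C : Finset (EuclideanSpace ℝ (Fin d))) (hCne : C.Nonempty) (hCcard : C.card = k)
    (hden1 : 0 < ∑ j ∈ Finset.Icc 1 t, cost1 z (x j) C)
    (hden2 : 0 < ∑ j ∈ Finset.Icc 1 t, dist (x j) (π (x j)) ^ z) :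
    cost1 z (x t) C / (∑ j ∈ Finset.Icc 1 t, cost1 z (x j) C) ≤
      2 ^ z * dist (x t) (π (x t)) ^ z / (∑ j ∈ Finset.Icc 1 t, dist (x j) (π (x j)) ^ z) +
      3 * 2 ^ (2 * z - 1) /
        (((Finset.Icc 1 t).filter (fun j => π (x j) = π (x t))).card : ℝ) := by
  set A := ∑ j ∈ Icc 1 t, cost1 z (x j) C
  set B := ∑ j ∈ Icc 1 t, dist (x j) (π (x j)) ^ z
  set S := (Icc 1 t).filter (fun j => π (x j) = π (x t))
  set P : ℝ := 2 ^ (z - 1)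
  have hBA : B ≤ 2 * A :=
    calc B = ∑ j ∈ Icc 1 t, cost1 z (x j) K :=
          sum_congr rfl fun j _ => by rw [cost1, (hπ (x j)).2]
      _ ≤ OPT t₁ := hKopt ▸ monotone_sum_Icc_cost1 z x K htt
      _ ≤ 2 * ∑ j ∈ Icc 1 t₀, cost1 z (x j) C := by
          linarith [(hOPT t₀).1 ⟨C, hCne, hCcard, rfl⟩]
      _ ≤ 2 * A := by gcongr; exact monotone_sum_Icc_cost1 z x C ht0.le
  have hpoint : cost1 z (x t) C ≤ P * (dist (x t) (π (x t)) ^ z + infDist (π (x t)) C ^ z) := by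
    rw [cost1_eq_infDist_rpow]
    exact infDist_rpow_le_two_rpow_mul hz _ _ _
  have hcluster : (S.card : ℝ) * infDist (π (x t)) C ^ z ≤ P * (B + A) := by
    rw [show A = ∑ j ∈ Icc 1 t, infDist (x j) C ^ z from
      sum_congr rfl fun j _ => cost1_eq_infDist_rpow z (x j) C]
    convert card_filter_mul_infDist_rpow_le hz C x (fun j => π (x j)) (Icc 1 t) (π (x t)) using 2
  have hS : (0 : ℝ) < S.card := by
    have htS : t ∈ S := mem_filter.mpr ⟨mem_Icc.mpr ⟨by omega, le_rfl⟩, rfl⟩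
    exact_mod_cast card_pos.mpr ⟨t, htS⟩
  calc _ ≤ 2 * P * dist (x t) (π (x t)) ^ z / B + 3 * P ^ 2 / S.card :=
        div_le_of_cluster_bound hden1 hden2 hS (by positivity) (by positivity) hBA hpoint hcluster
    _ ≤ _ := by
        rw [two_rpow_eq_two_mul_two_rpow_sub_one, two_rpow_two_mul_sub_one]
        gcongr
        nlinarith [sq_nonneg P]

/-- Within a block `(t₀, t₁]` where the optimum at most doubles, with `K` an optimal
set of `k` centers for the first `t₁` points and `π` the nearest-center assignment,
for every `t ∈ (t₀,t₁]` and every set `C` of `k` centers: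
`dist(x_t,C)^z / ∑_{j≤t} dist(x_j,C)^z
  ≤ 2^z · dist(x_t,π(x_t))^z / ∑_{j≤t} dist(x_j,π(x_j))^z + 3·2^{2z-1}/|S_t|`. -/
theorem online_sens_block_bound (d k n : ℕ) (z : ℝ) (hz : 1 ≤ z)
    (x : ℕ → EuclideanSpace ℝ (Fin d)) (t₀ t₁ : ℕ) (ht : t₀ < t₁) (ht₁ : t₁ ≤ n)
    (OPT : ℕ → ℝ)
    (hOPT : ∀ t, IsGLB {r : ℝ | ∃ C : Finset (EuclideanSpace ℝ (Fin d)),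
      C.Nonempty ∧ C.card = k ∧ r = ∑ j ∈ Finset.Icc 1 t, cost1 z (x j) C} (OPT t))
    (hdouble : OPT t₁ ≤ 2 * OPT t₀)
    (K : Finset (EuclideanSpace ℝ (Fin d))) (hKcard : K.card = k) (hKne : K.Nonempty)
    (hKopt : ∑ j ∈ Finset.Icc 1 t₁, cost1 z (x j) K = OPT t₁)
    (π : EuclideanSpace ℝ (Fin d) → EuclideanSpace ℝ (Fin d))
    (hπ : ∀ p, π p ∈ K ∧ dist p (π p) = distToSet p K)
    (t : ℕ) (ht0 : t₀ < t) (htt : t ≤ t₁)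
    (C : Finset (EuclideanSpace ℝ (Fin d))) (hCne : C.Nonempty) (hCcard : C.card = k)
    (hden1 : 0 < ∑ j ∈ Finset.Icc 1 t, cost1 z (x j) C)
    (hden2 : 0 < ∑ j ∈ Finset.Icc 1 t, dist (x j) (π (x j)) ^ z) :
    cost1 z (x t) C / (∑ j ∈ Finset.Icc 1 t, cost1 z (x j) C) ≤
      2 ^ z * dist (x t) (π (x t)) ^ z / (∑ j ∈ Finset.Icc 1 t, dist (x j) (π (x j)) ^ z) +
      3 * 2 ^ (2 * z - 1) /
        (((Finset.Icc 1 t).filter (fun j => π (x j) = π (x t))).card : ℝ) :=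
  online_sens_block_bound_general d k z hz x t₀ t₁ OPT hOPT hdouble K hKopt π hπ t ht0 htt C hCne
    hCcard hden1 hden2
end

section
/- Let C = {C_1,…,C_k} ⊂ [Δ]^d and let s ∈ [Δ]^d be a uniformly random shift defining a quadtree with O(log Δ) levels, where at level i the grid has side length 2^i. For each center C_j and each level i, a copy of C_j is created for each grid hyperplane H of the level-i grid with dist(C_j, H) < 2^i/(d·log Δ). Then the expected total number of copies created, over the random shift s, is at most O(k); hence the augmented set φ(C) has expected size O(k). -/
open scoped BigOperators Classical
open MeasureTheory

/-- Distance from a real number `y` to the nearest multiple of `L` (the nearest grid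
hyperplane position along one axis). -/
noncomputable def hplaneDist (y L : ℝ) : ℝ := |y - L * (round (y / L) : ℤ)|

/-! Fix a center, a level `t` and an axis. The event depends on a single coordinate of the
shift, and along it the points within `ε = 2^t / (d log Δ)` of the grid `2^t ℤ` form a union of
intervals of length `2ε`, at most `Δ / 2^t + 3` of which meet `[0, Δ]`. So the event has
probability at most `8 / (d log Δ)`, and summing over the `d` axes and `log Δ + 1` levels gives
`O(1)` expected copies per center. -/

open Set Finset

lemma Int.card_Icc_ceil_floor_le {a b : ℝ} (hab : a ≤ b + 1) :
    ((Finset.Icc ⌈a⌉ ⌊b⌋).card : ℝ) ≤ b - a + 1 := by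
  rw [Int.card_Icc]
  rcases le_total (⌊b⌋ + 1 - ⌈a⌉) 0 with h | h
  · simp [Int.toNat_of_nonpos h]; linarith
  · rw [← Int.cast_natCast, Int.toNat_of_nonneg h]
    push_cast
    linarith [Int.floor_le b, Int.le_ceil a]

section Grid

variable {L ε : ℝ}

lemma hplaneDist_le (hL : 0 < L) (y : ℝ) (m : ℤ) : hplaneDist y L ≤ |y - m * L| := by
  have key : ∀ z : ℤ, |y - z * L| = |y / L - z| * L := fun z => by
    rw [← abs_of_pos hL, ← abs_mul, abs_of_pos hL, sub_mul, div_mul_cancel₀ y hL.ne']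
  rw [hplaneDist, mul_comm, key, key]
  exact mul_le_mul_of_nonneg_right (round_le _ m) hL.le

lemma hplaneDist_lt_iff (hL : 0 < L) (y : ℝ) :
    hplaneDist y L < ε ↔ ∃ m : ℤ, |y - m * L| < ε :=
  ⟨fun h => ⟨round (y / L), by rwa [hplaneDist, mul_comm] at h⟩,
    fun ⟨m, hm⟩ => (hplaneDist_le hL y m).trans_lt hm⟩

lemma setOf_hplaneDist_add_lt (hL : 0 < L) (c : ℝ) :
    {x | hplaneDist (c + x) L < ε} = ⋃ m : ℤ, Metric.ball (m * L - c) ε := by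
  ext x
  simp only [mem_ofPred_eq, hplaneDist_lt_iff hL, mem_iUnion, Metric.mem_ball, Real.dist_eq]
  refine exists_congr fun m => ?_
  rw [sub_sub_eq_add_sub, add_comm x c]

lemma measurableSet_setOf_hplaneDist_add_lt (hL : 0 < L) (c : ℝ) :
    MeasurableSet {x | hplaneDist (c + x) L < ε} := by
  rw [setOf_hplaneDist_add_lt hL c]
  exact .iUnion fun _ => measurableSet_ball

lemma volume_Icc_inter_setOf_hplaneDist_add_lt_le (hL : 0 < L) (hε : 0 ≤ ε) {u v : ℝ}
    (huv : u ≤ v) (c : ℝ) :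
    volume (Icc u v ∩ {x | hplaneDist (c + x) L < ε})
      ≤ ENNReal.ofReal (((v - u + 2 * ε) / L + 1) * (2 * ε)) := by
  set M := Finset.Icc ⌈(c + u - ε) / L⌉ ⌊(c + v + ε) / L⌋
  have hcover : Icc u v ∩ {x | hplaneDist (c + x) L < ε}
      ⊆ ⋃ m ∈ M, Metric.ball (m * L - c) ε := by
    rintro x ⟨⟨hux, hxv⟩, hx⟩
    rw [setOf_hplaneDist_add_lt hL c, mem_iUnion] at hx
    obtain ⟨m, hm⟩ := hx
    rw [Metric.mem_ball, Real.dist_eq, abs_lt] at hm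
    refine mem_iUnion₂.mpr ⟨m, ?_, Metric.mem_ball.mpr (by rw [Real.dist_eq, abs_lt]; exact hm)⟩
    rw [← Int.cast_mem_Icc_iff, Set.mem_Icc, div_le_iff₀ hL, le_div_iff₀ hL]
    constructor <;> linarith
  have hcard : (M.card : ℝ) ≤ (v - u + 2 * ε) / L + 1 := by
    refine (Int.card_Icc_ceil_floor_le ?_).trans_eq ?_
    · rw [← sub_nonneg]; field_simp; nlinarith
    · field_simp; ring
  calc volume (Icc u v ∩ {x | hplaneDist (c + x) L < ε})
      ≤ ∑ m ∈ M, volume (Metric.ball ((m : ℝ) * L - c) ε) :=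
        (measure_mono hcover).trans (measure_biUnion_finset_le _ _)
    _ = M.card * ENNReal.ofReal (2 * ε) := by simp [Real.volume_ball]
    _ ≤ ENNReal.ofReal (((v - u + 2 * ε) / L + 1) * (2 * ε)) := by
        rw [← ENNReal.ofReal_natCast, ← ENNReal.ofReal_mul (Nat.cast_nonneg _)]
        gcongr

end Grid

section Cube

variable {ι : Type*}

lemma ite_eval_eq_indicator (P : ℝ → Prop) [DecidablePred P] (a : ι) :
    (fun s : ι → ℝ => if P (s a) then (1 : ℝ) else 0)
      = (Function.eval a ⁻¹' {x | P x}).indicator 1 := by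
  ext s
  simp [Set.indicator_apply]

variable [Fintype ι]

lemma measureReal_univ_pi_inter_eval_preimage (I S : Set ℝ) (a : ι) :
    volume.real (univ.pi (fun _ : ι => I) ∩ Function.eval a ⁻¹' S)
      = volume.real (I ∩ S) * volume.real I ^ (Fintype.card ι - 1) := by
  have hpi : univ.pi (fun _ : ι => I) ∩ Function.eval a ⁻¹' S
      = univ.pi (Function.update (fun _ => I) a (I ∩ S)) := by
    ext s
    simp only [Set.mem_inter_iff, mem_univ_pi, Set.mem_preimage,
      Function.forall_update_iff _ fun i t => s i ∈ t]
    constructor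
    · rintro ⟨hI, hS⟩; exact ⟨⟨hI a, hS⟩, fun i _ => hI i⟩
    · rintro ⟨⟨hIa, hS⟩, hI⟩
      exact ⟨fun i => if h : i = a then h ▸ hIa else hI i h, hS⟩
  have hrest : ∀ i ∈ Finset.univ.erase a,
      volume (Function.update (fun _ => I) a (I ∩ S) i) = volume I := fun i hi => by
    rw [Function.update_of_ne (Finset.ne_of_mem_erase hi)]
  rw [hpi, measureReal_def, volume_pi_pi, ← Finset.mul_prod_erase _ _ (Finset.mem_univ a),
    Function.update_self, Finset.prod_congr rfl hrest, Finset.prod_const,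
    Finset.card_erase_of_mem (Finset.mem_univ a), Finset.card_univ, ENNReal.toReal_mul,
    ENNReal.toReal_pow]
  rfl

lemma setIntegral_univ_pi_ite_eval {P : ℝ → Prop} [DecidablePred P]
    (hP : MeasurableSet {x | P x}) (I : Set ℝ) (a : ι) :
    ∫ s in univ.pi (fun _ : ι => I), (if P (s a) then (1 : ℝ) else 0)
      = volume.real (I ∩ {x | P x}) * volume.real I ^ (Fintype.card ι - 1) := by
  rw [ite_eval_eq_indicator, integral_indicator_one (measurable_pi_apply a hP),
    measureReal_restrict_apply (measurable_pi_apply a hP), inter_comm,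
    measureReal_univ_pi_inter_eval_preimage]

lemma integrableOn_univ_pi_ite_eval {P : ℝ → Prop} [DecidablePred P]
    (hP : MeasurableSet {x | P x}) {I : Set ℝ} (hI : IsCompact I) (a : ι) :
    IntegrableOn (fun s : ι → ℝ => if P (s a) then (1 : ℝ) else 0) (univ.pi fun _ => I) := by
  rw [ite_eval_eq_indicator]
  exact (integrableOn_const (isCompact_univ_pi fun _ => hI).measure_lt_top.ne).indicator
    (measurable_pi_apply a hP)

lemma setIntegral_ite_hplaneDist_lt_le {B L D : ℝ} (hL : 0 < L) (hLB : L ≤ B) (hD : 1 ≤ D)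
    (c : ℝ) (a : ι) :
    ∫ s in univ.pi (fun _ : ι => Icc 0 B), (if hplaneDist (c + s a) L < L / D then (1 : ℝ) else 0)
      ≤ 8 * B ^ Fintype.card ι / D := by
  have : Nonempty ι := ⟨a⟩
  have hB : 0 ≤ B := hL.le.trans hLB
  have hD0 : 0 < D := one_pos.trans_le hD
  have hline : volume.real (Icc 0 B ∩ {x | hplaneDist (c + x) L < L / D}) ≤ 8 * B / D := by
    refine (ENNReal.toReal_le_of_le_ofReal ?_
      (volume_Icc_inter_setOf_hplaneDist_add_lt_le hL (by positivity) hB c)).trans ?_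
    · positivity
    · have hεB : 2 * (L / D) ≤ 2 * B := by
        gcongr; exact (div_le_self hL.le hD).trans hLB
      calc ((B - 0 + 2 * (L / D)) / L + 1) * (2 * (L / D)) = 2 * (B + 2 * (L / D) + L) / D := by
            field_simp; ring
        _ ≤ 8 * B / D := div_le_div_of_nonneg_right (by linarith) hD0.le
  rw [setIntegral_univ_pi_ite_eval (measurableSet_setOf_hplaneDist_add_lt hL c),
    Real.volume_real_Icc_of_le hB, sub_zero]
  calc _ ≤ 8 * B / D * B ^ (Fintype.card ι - 1) := by gcongr
    _ = 8 * B ^ Fintype.card ι / D := by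
      rw [div_mul_eq_mul_div, mul_assoc, mul_pow_sub_one Fintype.card_ne_zero]

end Cube

/-- Expected number of projected copies created by the bicriteria quadtree mapping `φ`:
for a uniformly random shift `s ∈ [0,Δ]^d`, the expected number of triples
`(center c, level t, axis a)` with `dist(c+s, level-t hyperplane along axis a)
 < 2^t/(d·log Δ)` is at most `O(k)`; stated as an integral bound over the shift cube. -/
theorem expected_quadtree_copies :
    ∃ A : ℝ, 0 < A ∧ ∀ (d ℓ k : ℕ), 1 ≤ d → 2 ≤ ℓ → 1 ≤ k →
      ∀ C : Finset (Fin d → Fin (2 ^ ℓ)), C.card = k →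
      (∫ s in (Set.univ.pi fun _ : Fin d => Set.Icc (0 : ℝ) (2 ^ ℓ)),
          ∑ c ∈ C, ∑ t ∈ Finset.range (ℓ + 1), ∑ a : Fin d,
            (if hplaneDist (((c a : ℕ) : ℝ) + s a) (2 ^ t) <
                2 ^ t / (d * Real.log (2 ^ ℓ)) then (1 : ℝ) else 0)) ≤
        A * k * ((2 : ℝ) ^ ℓ) ^ d := by
  refine ⟨12 / Real.log 2, by positivity, fun d ℓ k hd hℓ _ C hC => ?_⟩
  set B : ℝ := 2 ^ ℓ
  have hℓ' : (2 : ℝ) ≤ ℓ := by exact_mod_cast hℓ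
  have hlogB : Real.log B = ℓ * Real.log 2 := Real.log_pow _ _
  have hD : 1 ≤ (d : ℝ) * Real.log B := by
    have hd' : (1 : ℝ) ≤ d := by exact_mod_cast hd
    have hℓlog : 1 ≤ ℓ * Real.log 2 := by nlinarith [Real.log_two_gt_d9]
    rw [hlogB]; nlinarith
  simp_rw [← sum_product']
  rw [integral_finsetSum _ fun i _ => integrableOn_univ_pi_ite_eval
    (measurableSet_setOf_hplaneDist_add_lt (by positivity) _) isCompact_Icc _]
  calc _ ≤ ∑ _ ∈ C ×ˢ range (ℓ + 1) ×ˢ Finset.univ, 8 * B ^ d / (d * Real.log B) := by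
        refine sum_le_sum fun ⟨c, t, a⟩ hi => ?_
        have ht : t ≤ ℓ := mem_range_succ_iff.mp (mem_product.mp (mem_product.mp hi).2).1
        simpa using setIntegral_ite_hplaneDist_lt_le (by positivity)
          (pow_le_pow_right₀ one_le_two ht) hD _ a
    _ = 8 * (ℓ + 1) / ℓ * (k * B ^ d / Real.log 2) := by
        simp only [sum_const, card_product, card_range, card_univ, Fintype.card_fin, hC,
          nsmul_eq_mul, hlogB]
        field_simp
        push_cast
        ring
    _ ≤ 12 * (k * B ^ d / Real.log 2) := by
        gcongr
        rw [div_le_iff₀ (by positivity)]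
        linarith
    _ = 12 / Real.log 2 * k * B ^ d := by ring
end
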